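/- arXiv:1812.11152 — 4 statements merged into one kernel-verified Lean document; each statement's English description precedes it below -/
import Mathlib

section
/- For any graph G and λ > 0, if I is drawn from the hard-core model on G at fugacity λ, then the expected size satisfies E|I| ≥ (λ/(1+λ)) · |V(G)| · (1+λ)^{-2|E(G)|/|V(G)|}. -/
open Finset

/-- The independent sets (including ∅) of a finite graph, as a `Finset`. -/
def indepSets {n : ℕ} (G : SimpleGraph (Fin n)) [DecidableRel G.Adj] :
    Finset (Finset (Fin n)) :=
  univ.filter fun s => ∀ u ∈ s, ∀ w ∈ s, ¬ G.Adj u w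

/-- The partition function (independence polynomial) `Z_G(λ)`. -/
noncomputable def hcZ {n : ℕ} (G : SimpleGraph (Fin n)) [DecidableRel G.Adj] (lam : ℝ) : ℝ :=
  ∑ I ∈ indepSets G, lam ^ I.card

/-- Expected size of the random independent set in the hard-core model at fugacity `lam`. -/
noncomputable def hcExpSize {n : ℕ} (G : SimpleGraph (Fin n)) [DecidableRel G.Adj]
    (lam : ℝ) : ℝ :=
  (∑ I ∈ indepSets G, (I.card : ℝ) * lam ^ I.card) / hcZ G lam

set_option maxHeartbeats 1000000

lemma sum_powerset_pow_card {α : Type*} [DecidableEq α] (s : Finset α) (lam : ℝ) :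
    ∑ T ∈ s.powerset, lam ^ T.card = (1 + lam) ^ s.card := by
  rw [Finset.sum_powerset_apply_card, add_comm (1:ℝ) lam, add_pow]
  refine Finset.sum_congr rfl fun i _ => ?_
  rw [one_pow, mul_one, nsmul_eq_mul, mul_comm]

lemma hcZ_pos {n : ℕ} (G : SimpleGraph (Fin n)) [DecidableRel G.Adj] {lam : ℝ}
    (hlam : 0 < lam) : 0 < hcZ G lam := by
  have hempty : (∅ : Finset (Fin n)) ∈ indepSets G := by simp [indepSets]
  exact Finset.sum_pos' (fun I _ => by positivity) ⟨∅, hempty, by norm_num⟩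

/-- Key per-vertex lemma: the weight of independent sets containing `v` is at least
`λ/(1+λ)^(deg v + 1)` times the partition function. -/
lemma key_vertex {n : ℕ} (G : SimpleGraph (Fin n)) [DecidableRel G.Adj] {lam : ℝ}
    (hlam : 0 < lam) (v : Fin n) :
    lam / (1 + lam) ^ (G.degree v + 1) * hcZ G lam ≤
      ∑ I ∈ (indepSets G).filter (fun I => v ∈ I), lam ^ I.card := by
  classical
  set CN : Finset (Fin n) := insert v (G.neighborFinset v) with hCN
  have hvCN : v ∈ CN := Finset.mem_insert_self _ _
  have hCNcard : CN.card = G.degree v + 1 := by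
    rw [hCN, Finset.card_insert_of_notMem (by simp), SimpleGraph.card_neighborFinset_eq_degree]
  set t : Finset (Finset (Fin n)) := (indepSets G).image (fun I => I \ CN) with ht
  have hone : (0:ℝ) < 1 + lam := by linarith
  -- properties of members of t
  have htmem : ∀ J ∈ t, (∀ u ∈ J, ∀ w ∈ J, ¬ G.Adj u w) ∧ Disjoint J CN := by
    intro J hJ
    rw [ht, Finset.mem_image] at hJ
    obtain ⟨I, hI, rfl⟩ := hJ
    simp only [indepSets, Finset.mem_filter] at hI
    refine ⟨fun u hu w hw => hI.2 u (Finset.mem_sdiff.1 hu).1 w (Finset.mem_sdiff.1 hw).1,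
      Finset.sdiff_disjoint⟩
  -- insert v J is an independent set containing v, with (insert v J) \ CN = J
  have hins : ∀ J ∈ t, insert v J ∈ (indepSets G).filter (fun I => v ∈ I) ∧
      (insert v J) \ CN = J ∧ v ∉ J := by
    intro J hJ
    obtain ⟨hind, hdisj⟩ := htmem J hJ
    have hvJ : v ∉ J := fun h => (Finset.disjoint_left.1 hdisj h) hvCN
    have hnadj : ∀ u ∈ J, ¬ G.Adj v u := by
      intro u hu hadj
      exact (Finset.disjoint_left.1 hdisj hu)
        (Finset.mem_insert_of_mem (by rwa [SimpleGraph.mem_neighborFinset]))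
    refine ⟨Finset.mem_filter.2 ⟨Finset.mem_filter.2 ⟨Finset.mem_univ _, ?_⟩,
      Finset.mem_insert_self _ _⟩, ?_, hvJ⟩
    · intro u hu w hw hadj
      rcases Finset.mem_insert.1 hu with h1 | h1 <;> rcases Finset.mem_insert.1 hw with h2 | h2
      · rw [h1, h2] at hadj; exact G.loopless.irrefl v hadj
      · rw [h1] at hadj; exact hnadj w h2 hadj
      · rw [h2] at hadj; exact hnadj u h1 hadj.symm
      · exact hind u h1 w h2 hadj
    · rw [Finset.insert_sdiff_of_mem _ hvCN, Finset.sdiff_eq_self_of_disjoint hdisj]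
  -- upper bound for Z
  have hZle : hcZ G lam ≤ ∑ J ∈ t, lam ^ J.card * (1 + lam) ^ (G.degree v + 1) := by
    rw [hcZ, ← Finset.sum_fiberwise_of_maps_to (g := fun I => I \ CN)
      (fun I hI => Finset.mem_image_of_mem _ hI) (fun I => lam ^ I.card)]
    refine Finset.sum_le_sum fun J hJ => ?_
    have hfib : ∀ I ∈ (indepSets G).filter (fun I => I \ CN = J),
        lam ^ I.card = lam ^ J.card * lam ^ (I ∩ CN).card := by
      intro I hI
      have h1 := Finset.card_sdiff_add_card_inter I CN
      rw [(Finset.mem_filter.1 hI).2] at h1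
      rw [← pow_add, h1]
    rw [Finset.sum_congr rfl hfib, ← Finset.mul_sum]
    refine mul_le_mul_of_nonneg_left ?_ (by positivity)
    -- the map I ↦ I ∩ CN is injective on the fiber
    have hinj : ∀ I₁ ∈ (indepSets G).filter (fun I => I \ CN = J),
        ∀ I₂ ∈ (indepSets G).filter (fun I => I \ CN = J),
        I₁ ∩ CN = I₂ ∩ CN → I₁ = I₂ := by
      intro I₁ h₁ I₂ h₂ h
      have e₁ : I₁ = (I₁ \ CN) ∪ (I₁ ∩ CN) := (Finset.sdiff_union_inter I₁ CN).symm
      have e₂ : I₂ = (I₂ \ CN) ∪ (I₂ ∩ CN) := (Finset.sdiff_union_inter I₂ CN).symm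
      rw [e₁, e₂, (Finset.mem_filter.1 h₁).2, (Finset.mem_filter.1 h₂).2, h]
    have him : ∑ T ∈ ((indepSets G).filter (fun I => I \ CN = J)).image (fun I => I ∩ CN),
        lam ^ T.card = ∑ I ∈ (indepSets G).filter (fun I => I \ CN = J), lam ^ (I ∩ CN).card :=
      Finset.sum_image hinj
    rw [← him, ← hCNcard, ← sum_powerset_pow_card CN lam]
    refine Finset.sum_le_sum_of_subset_of_nonneg ?_ (fun T _ _ => by positivity)
    intro T hT
    obtain ⟨I, _, rfl⟩ := Finset.mem_image.1 hT
    exact Finset.mem_powerset.2 (Finset.inter_subset_right)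
  -- lower bound for sets containing v
  have hAge : ∑ J ∈ t, lam ^ J.card * lam ≤
      ∑ I ∈ (indepSets G).filter (fun I => v ∈ I), lam ^ I.card := by
    have hinj : ∀ J₁ ∈ t, ∀ J₂ ∈ t, insert v J₁ = insert v J₂ → J₁ = J₂ := by
      intro J₁ h₁ J₂ h₂ h
      have hv₁ := (hins J₁ h₁).2.2
      have hv₂ := (hins J₂ h₂).2.2
      rw [← Finset.erase_insert hv₁, ← Finset.erase_insert hv₂, h]
    calc ∑ J ∈ t, lam ^ J.card * lam
        = ∑ J ∈ t, lam ^ (insert v J).card := by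
          refine Finset.sum_congr rfl fun J hJ => ?_
          rw [Finset.card_insert_of_notMem (hins J hJ).2.2, pow_succ]
      _ = ∑ I ∈ t.image (insert v), lam ^ I.card := by
          rw [Finset.sum_image hinj]
      _ ≤ ∑ I ∈ (indepSets G).filter (fun I => v ∈ I), lam ^ I.card := by
          refine Finset.sum_le_sum_of_subset_of_nonneg ?_ (fun T _ _ => by positivity)
          intro I hI
          obtain ⟨J, hJ, rfl⟩ := Finset.mem_image.1 hI
          exact (hins J hJ).1
  -- combine
  have hne : ((1 + lam) ^ (G.degree v + 1)) ≠ 0 := by positivity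
  have h1 : lam / (1 + lam) ^ (G.degree v + 1) * hcZ G lam ≤
      lam / (1 + lam) ^ (G.degree v + 1) *
        (∑ J ∈ t, lam ^ J.card * (1 + lam) ^ (G.degree v + 1)) :=
    mul_le_mul_of_nonneg_left hZle (by positivity)
  have h2 : lam / (1 + lam) ^ (G.degree v + 1) *
      (∑ J ∈ t, lam ^ J.card * (1 + lam) ^ (G.degree v + 1)) =
      ∑ J ∈ t, lam ^ J.card * lam := by
    rw [Finset.mul_sum]
    refine Finset.sum_congr rfl fun J _ => ?_
    field_simp
  exact h1.trans (h2 ▸ hAge)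

theorem stmt_2 (n : ℕ) (hn : 0 < n) (G : SimpleGraph (Fin n)) [DecidableRel G.Adj]
    (lam : ℝ) (hlam : 0 < lam) :
    hcExpSize G lam ≥
      lam / (1 + lam) * n * (1 + lam) ^ (-(2 * (G.edgeFinset.card : ℝ) / n)) := by
  classical
  have hone : (0:ℝ) < 1 + lam := by linarith
  have hn' : (0:ℝ) < n := Nat.cast_pos.2 hn
  have hnne : (n:ℝ) ≠ 0 := hn'.ne'
  have hZ : 0 < hcZ G lam := hcZ_pos G hlam
  -- Step 1: numerator = ∑_v (weight of independent sets containing v)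
  have hnum : ∑ I ∈ indepSets G, (I.card : ℝ) * lam ^ I.card =
      ∑ v : Fin n, ∑ I ∈ (indepSets G).filter (fun I => v ∈ I), lam ^ I.card := by
    have h : ∀ I ∈ indepSets G, (I.card : ℝ) * lam ^ I.card =
        ∑ v : Fin n, if v ∈ I then lam ^ I.card else 0 := by
      intro I _
      rw [Finset.sum_ite_mem, Finset.univ_inter, Finset.sum_const, nsmul_eq_mul]
    rw [Finset.sum_congr rfl h, Finset.sum_comm]
    exact Finset.sum_congr rfl fun v _ => (Finset.sum_filter _ _).symm
  -- Step 2: lower bound the numerator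
  have hnum_ge : (∑ v : Fin n, lam / (1 + lam) ^ (G.degree v + 1)) * hcZ G lam ≤
      ∑ I ∈ indepSets G, (I.card : ℝ) * lam ^ I.card := by
    rw [hnum, Finset.sum_mul]
    exact Finset.sum_le_sum fun v _ => key_vertex G hlam v
  -- Step 3: hcExpSize ≥ ∑_v λ/(1+λ)^(d_v+1)
  have hE : ∑ v : Fin n, lam / (1 + lam) ^ (G.degree v + 1) ≤ hcExpSize G lam := by
    rw [hcExpSize, le_div_iff₀ hZ]
    exact hnum_ge
  refine le_trans ?_ hE
  -- Step 4: rewrite each term with rpow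
  have hterm : ∀ v : Fin n, lam / (1 + lam) ^ (G.degree v + 1) =
      lam / (1 + lam) * (1 + lam) ^ (-(G.degree v : ℝ)) := by
    intro v
    rw [Real.rpow_neg hone.le, Real.rpow_natCast, ← div_eq_mul_inv, div_div, ← pow_succ']
  rw [Finset.sum_congr rfl fun v _ => hterm v, ← Finset.mul_sum]
  -- Step 5: AM-GM / Jensen
  have hAMGM : (n : ℝ) * (1 + lam) ^ (-(2 * (G.edgeFinset.card : ℝ) / n)) ≤
      ∑ v : Fin n, (1 + lam) ^ (-(G.degree v : ℝ)) := by
    have key := Real.geom_mean_le_arith_mean_weighted Finset.univ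
      (fun _ : Fin n => 1 / n) (fun v => (1 + lam) ^ (-(G.degree v : ℝ)))
      (fun _ _ => by positivity)
      (by rw [Finset.sum_const, Finset.card_univ, Fintype.card_fin, nsmul_eq_mul,
            mul_one_div, div_self hnne])
      (fun v _ => (Real.rpow_pos_of_pos hone _).le)
    have hprod : ∏ v : Fin n, ((1 + lam) ^ (-(G.degree v : ℝ))) ^ (1 / (n:ℝ)) =
        (1 + lam) ^ (-(2 * (G.edgeFinset.card : ℝ) / n)) := by
      have h : ∀ v : Fin n, ((1 + lam) ^ (-(G.degree v : ℝ))) ^ (1 / (n:ℝ)) =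
          (1 + lam) ^ (-(G.degree v : ℝ) * (1 / n)) := fun v =>
        (Real.rpow_mul hone.le _ _).symm
      rw [Finset.prod_congr rfl fun v _ => h v, ← Real.rpow_sum_of_pos hone]
      congr 1
      have hsum : ∑ v : Fin n, (G.degree v : ℝ) = 2 * (G.edgeFinset.card : ℝ) := by
        rw [← Nat.cast_sum, SimpleGraph.sum_degrees_eq_twice_card_edges]
        push_cast; ring
      rw [← Finset.sum_mul, Finset.sum_neg_distrib, hsum, neg_mul, mul_one_div]
    rw [hprod] at key
    rw [← Finset.mul_sum] at key
    calc (n : ℝ) * (1 + lam) ^ (-(2 * (G.edgeFinset.card : ℝ) / n))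
        ≤ (n : ℝ) * ((1 / n) * ∑ v : Fin n, (1 + lam) ^ (-(G.degree v : ℝ))) :=
          mul_le_mul_of_nonneg_left key hn'.le
      _ = ∑ v : Fin n, (1 + lam) ^ (-(G.degree v : ℝ)) := by
          rw [← mul_assoc, mul_one_div, div_self hnne, one_mul]
  have hc : 0 ≤ lam / (1 + lam) := by positivity
  calc lam / (1 + lam) * n * (1 + lam) ^ (-(2 * (G.edgeFinset.card : ℝ) / n))
      = lam / (1 + lam) * ((n : ℝ) * (1 + lam) ^ (-(2 * (G.edgeFinset.card : ℝ) / n))) := by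
        ring
    _ ≤ lam / (1 + lam) * ∑ v : Fin n, (1 + lam) ^ (-(G.degree v : ℝ)) :=
        mul_le_mul_of_nonneg_left hAMGM hc
end

section
/- Let G be a graph of maximum degree Δ, and let α, β > 0. Suppose that for every (vertex-)induced subgraph H of G there is a probability distribution on the independent sets of H such that, writing I_H for the random independent set, every vertex v of H satisfies α·Pr(v ∈ I_H) + β·E|N_H(v) ∩ I_H| ≥ 1. Then the fractional chromatic number of G is at most α + βΔ. -/
open Finset

/-- The fractional chromatic number: the least total weight of a fractional colouring,
i.e. of a nonnegative weighting of independent sets covering every vertex with weight ≥ 1. -/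
noncomputable def fracChi {n : ℕ} (G : SimpleGraph (Fin n)) [DecidableRel G.Adj] : ℝ :=
  sInf { W : ℝ | ∃ w : Finset (Fin n) → ℝ, (∀ I, 0 ≤ w I) ∧
    (∀ I, w I ≠ 0 → I ∈ indepSets G) ∧
    (∀ v : Fin n, 1 ≤ ∑ I ∈ (univ : Finset (Finset (Fin n))).filter (fun I => v ∈ I), w I) ∧
    W = ∑ I ∈ (univ : Finset (Finset (Fin n))), w I }

section Aux

variable {n : ℕ} (δ : ℝ) (q : Finset (Fin n) → Finset (Fin n) → ℝ)

open scoped Classical in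
/-- The accumulated coverage of each vertex after `t` steps of the greedy process. -/
noncomputable def cov : ℕ → Fin n → ℝ
  | 0 => fun _ => 0
  | (t+1) => fun v => cov t v +
      δ * ∑ I ∈ univ.filter (fun I => v ∈ I),
        q (univ.filter (fun u => cov t u < 1)) I

open scoped Classical in
/-- The set of still-uncovered vertices at time `t`. -/
noncomputable def covS (t : ℕ) : Finset (Fin n) :=
  univ.filter (fun u => cov δ q t u < 1)

/-- Probability that `v` lies in the random independent set at step `t`. -/
noncomputable def pr (t : ℕ) (v : Fin n) : ℝ :=
  ∑ I ∈ univ.filter (fun I => v ∈ I), q (covS δ q t) I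

lemma cov_succ (t : ℕ) (v : Fin n) :
    cov δ q (t+1) v = cov δ q t v + δ * pr δ q t v := rfl

lemma mem_covS {t : ℕ} {v : Fin n} : v ∈ covS δ q t ↔ cov δ q t v < 1 := by
  simp [covS]

variable (hq0 : ∀ S I, 0 ≤ q S I)
  (hq1 : ∀ S, (∑ I ∈ (univ : Finset (Finset (Fin n))), q S I) = 1)
  (hq2 : ∀ S I, q S I ≠ 0 → I ⊆ S)

include hq0 in
lemma pr_nonneg (t : ℕ) (v : Fin n) : 0 ≤ pr δ q t v :=
  sum_nonneg fun I _ => hq0 _ I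

include hq0 hq1 in
lemma pr_le_one (t : ℕ) (v : Fin n) : pr δ q t v ≤ 1 := by
  rw [← hq1 (covS δ q t)]
  exact sum_le_sum_of_subset_of_nonneg (filter_subset _ _) fun I _ _ => hq0 _ I

include hq2 in
lemma pr_eq_zero {t : ℕ} {v : Fin n} (h : 1 ≤ cov δ q t v) : pr δ q t v = 0 := by
  refine sum_eq_zero fun I hI => ?_
  by_contra hne
  have hv : v ∈ I := (mem_filter.mp hI).2
  have := (mem_covS δ q).mp (hq2 _ _ hne hv)
  linarith

include hq0 in
lemma cov_nonneg (t : ℕ) (v : Fin n) (hδ : 0 ≤ δ) : 0 ≤ cov δ q t v := by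
  induction t with
  | zero => simp [cov]
  | succ t ih =>
    rw [cov_succ]
    have := pr_nonneg δ q hq0 t v
    nlinarith

include hq0 hq1 hq2 in
lemma cov_lt (hδ : 0 < δ) (t : ℕ) (v : Fin n) : cov δ q t v < 1 + δ := by
  induction t with
  | zero => simp [cov]; linarith
  | succ t ih =>
    rw [cov_succ]
    by_cases h : cov δ q t v < 1
    · have := pr_le_one δ q hq0 hq1 t v
      nlinarith
    · rw [pr_eq_zero δ q hq2 (le_of_not_gt h)]
      linarith

include hq0 in
lemma cov_mono (hδ : 0 ≤ δ) {s t : ℕ} (h : s ≤ t) (v : Fin n) :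
    cov δ q s v ≤ cov δ q t v := by
  induction h with
  | refl => exact le_refl _
  | @step m h ih =>
    refine ih.trans ?_
    rw [cov_succ]
    have := pr_nonneg δ q hq0 m v
    nlinarith

omit hq0 in
lemma cov_eq_sum (t : ℕ) (v : Fin n) :
    cov δ q t v = ∑ s ∈ range t, δ * pr δ q s v := by
  induction t with
  | zero => simp [cov]
  | succ t ih => rw [cov_succ, sum_range_succ, ih]

include hq0 in
lemma expect_le_sum_pr {G : SimpleGraph (Fin n)} [DecidableRel G.Adj] (S : Finset (Fin n))
    (v : Fin n) :
    ∑ I ∈ (univ : Finset (Finset (Fin n))),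
        q S I * ((I ∩ (G.neighborFinset v ∩ S)).card : ℝ) ≤
      ∑ u ∈ G.neighborFinset v, ∑ I ∈ univ.filter (fun I => u ∈ I), q S I := by
  have step1 : ∀ I : Finset (Fin n),
      q S I * ((I ∩ (G.neighborFinset v ∩ S)).card : ℝ) ≤
        q S I * ((I ∩ G.neighborFinset v).card : ℝ) := by
    intro I
    have : (I ∩ (G.neighborFinset v ∩ S)).card ≤ (I ∩ G.neighborFinset v).card :=
      card_le_card (inter_subset_inter (le_refl I) inter_subset_left)
    exact mul_le_mul_of_nonneg_left (by exact_mod_cast this) (hq0 S I)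
  refine (sum_le_sum fun I _ => step1 I).trans (le_of_eq ?_)
  have card_eq : ∀ I : Finset (Fin n),
      ((I ∩ G.neighborFinset v).card : ℝ) =
        ∑ u ∈ G.neighborFinset v, if u ∈ I then (1 : ℝ) else 0 := by
    intro I
    rw [inter_comm, ← filter_mem_eq_inter, card_filter]
    push_cast
    rfl
  calc ∑ I ∈ (univ : Finset (Finset (Fin n))), q S I * ((I ∩ G.neighborFinset v).card : ℝ)
      = ∑ I ∈ (univ : Finset (Finset (Fin n))),
          ∑ u ∈ G.neighborFinset v, (if u ∈ I then q S I else 0) := by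
        refine sum_congr rfl fun I _ => ?_
        rw [card_eq, mul_sum]
        exact sum_congr rfl fun u _ => by split <;> simp
    _ = ∑ u ∈ G.neighborFinset v, ∑ I ∈ (univ : Finset (Finset (Fin n))),
          (if u ∈ I then q S I else 0) := sum_comm
    _ = ∑ u ∈ G.neighborFinset v, ∑ I ∈ univ.filter (fun I => u ∈ I), q S I := by
        exact sum_congr rfl fun u _ => (sum_filter _ _).symm

include hq0 in
lemma key {G : SimpleGraph (Fin n)} [DecidableRel G.Adj] (α β : ℝ) (hδ : 0 < δ) (hβ : 0 ≤ β)
    (hq4 : ∀ S : Finset (Fin n), ∀ v ∈ S,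
      α * (∑ I ∈ (univ : Finset (Finset (Fin n))).filter (fun I => v ∈ I), q S I) +
        β * (∑ I ∈ (univ : Finset (Finset (Fin n))),
              q S I * ((I ∩ (G.neighborFinset v ∩ S)).card : ℝ)) ≥ 1)
    (K : ℕ) (v : Fin n) (hcov : cov δ q K v < 1) :
    (K : ℝ) * δ ≤ α * cov δ q K v + β * ∑ u ∈ G.neighborFinset v, cov δ q K u := by
  induction K with
  | zero => simp [cov]
  | succ K ih =>
    have h1 : cov δ q K v < 1 := by
      refine lt_of_le_of_lt ?_ hcov
      rw [cov_succ]
      have := pr_nonneg δ q hq0 K v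
      nlinarith
    have hKle := ih h1
    have hstep : 1 ≤ α * pr δ q K v + β * ∑ u ∈ G.neighborFinset v, pr δ q K u := by
      have h4 : 1 ≤ α * pr δ q K v +
          β * ∑ I ∈ (univ : Finset (Finset (Fin n))),
            q (covS δ q K) I * ((I ∩ (G.neighborFinset v ∩ covS δ q K)).card : ℝ) :=
        hq4 (covS δ q K) v ((mem_covS δ q).mpr h1)
      have hE : ∑ I ∈ (univ : Finset (Finset (Fin n))),
            q (covS δ q K) I * ((I ∩ (G.neighborFinset v ∩ covS δ q K)).card : ℝ) ≤
          ∑ u ∈ G.neighborFinset v, pr δ q K u :=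
        expect_le_sum_pr q hq0 (G := G) (covS δ q K) v
      nlinarith [mul_le_mul_of_nonneg_left hE hβ]
    have hsum : ∑ u ∈ G.neighborFinset v, cov δ q (K+1) u
        = (∑ u ∈ G.neighborFinset v, cov δ q K u) +
            δ * ∑ u ∈ G.neighborFinset v, pr δ q K u := by
      simp only [cov_succ]
      rw [sum_add_distrib, mul_sum]
    rw [cov_succ, hsum]
    push_cast
    nlinarith [mul_le_mul_of_nonneg_left hstep hδ.le]

end Aux

theorem stmt_5 (n : ℕ) (G : SimpleGraph (Fin n)) [DecidableRel G.Adj]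
    (Δ : ℕ) (hΔ : ∀ v, G.degree v ≤ Δ) (α β : ℝ) (hα : 0 < α) (hβ : 0 < β)
    (hdist : ∀ S : Finset (Fin n), ∃ p : Finset (Fin n) → ℝ,
      (∀ I, 0 ≤ p I) ∧
      (∀ I, p I ≠ 0 → I ⊆ S ∧ I ∈ indepSets G) ∧
      (∑ I ∈ (univ : Finset (Finset (Fin n))), p I) = 1 ∧
      (∀ v ∈ S,
        α * (∑ I ∈ (univ : Finset (Finset (Fin n))).filter (fun I => v ∈ I), p I) +
          β * (∑ I ∈ (univ : Finset (Finset (Fin n))),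
                p I * ((I ∩ (G.neighborFinset v ∩ S)).card : ℝ)) ≥ 1)) :
    fracChi G ≤ α + β * Δ := by
  set q : Finset (Fin n) → Finset (Fin n) → ℝ := fun S => (hdist S).choose with hqdef
  have hq0 : ∀ S I, 0 ≤ q S I := fun S => ((hdist S).choose_spec).1
  have hq2' : ∀ S I, q S I ≠ 0 → I ⊆ S ∧ I ∈ indepSets G :=
    fun S => ((hdist S).choose_spec).2.1
  have hq2 : ∀ S I, q S I ≠ 0 → I ⊆ S := fun S I h => (hq2' S I h).1
  have hq1 : ∀ S, (∑ I ∈ (univ : Finset (Finset (Fin n))), q S I) = 1 :=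
    fun S => ((hdist S).choose_spec).2.2.1
  have hq4 : ∀ S : Finset (Fin n), ∀ v ∈ S,
      α * (∑ I ∈ (univ : Finset (Finset (Fin n))).filter (fun I => v ∈ I), q S I) +
        β * (∑ I ∈ (univ : Finset (Finset (Fin n))),
              q S I * ((I ∩ (G.neighborFinset v ∩ S)).card : ℝ)) ≥ 1 :=
    fun S => ((hdist S).choose_spec).2.2.2
  refine le_of_forall_pos_le_add ?_
  intro ε hε
  have hden : (0:ℝ) < β * Δ + 1 := by positivity
  set δ : ℝ := ε / (β * Δ + 1) with hδdef
  have hδ : 0 < δ := div_pos hε hden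
  have hδε : δ * (β * Δ + 1) = ε := div_mul_cancel₀ ε hden.ne'
  -- the sum of coverage over neighbours is bounded
  have hnbr : ∀ (t : ℕ) (v : Fin n),
      ∑ u ∈ G.neighborFinset v, cov δ q t u ≤ (Δ : ℝ) * (1 + δ) := by
    intro t v
    calc ∑ u ∈ G.neighborFinset v, cov δ q t u
        ≤ (G.neighborFinset v).card • (1 + δ) :=
          sum_le_card_nsmul _ _ _ fun u _ => (cov_lt δ q hq0 hq1 hq2 hδ t u).le
      _ = ((G.degree v : ℝ)) * (1 + δ) := by
          rw [nsmul_eq_mul, G.card_neighborFinset_eq_degree]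
      _ ≤ (Δ : ℝ) * (1 + δ) := by
          have : (G.degree v : ℝ) ≤ (Δ : ℝ) := by exact_mod_cast hΔ v
          nlinarith
  -- a time at which everything is covered
  obtain ⟨K, hK⟩ := exists_nat_ge ((α + β * Δ * (1 + δ)) / δ)
  have hKδ : α + β * Δ * (1 + δ) ≤ (K : ℝ) * δ := by
    rw [div_le_iff₀ hδ] at hK
    exact hK
  have hPK : ∀ v, 1 ≤ cov δ q K v := by
    intro v
    by_contra h
    push_neg at h
    have hk := key δ q hq0 α β hδ hβ.le hq4 K v h
    have h2 := hnbr K v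
    have h3 : α * cov δ q K v < α * 1 := by
      have h0 := cov_nonneg δ q hq0 K v hδ.le
      nlinarith
    nlinarith [mul_le_mul_of_nonneg_left h2 hβ.le]
  classical
  let M : ℕ := Nat.find (⟨K, hPK⟩ : ∃ t, ∀ v, 1 ≤ cov δ q t v)
  have hPM : ∀ v, 1 ≤ cov δ q M v := Nat.find_spec (⟨K, hPK⟩ : ∃ t, ∀ v, 1 ≤ cov δ q t v)
  have hMδ : (M : ℝ) * δ ≤ α + β * Δ + ε := by
    rcases Nat.eq_zero_or_pos M with hM0 | hMpos
    · rw [hM0]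
      push_cast
      nlinarith
    · obtain ⟨m, hm⟩ := Nat.exists_eq_succ_of_ne_zero hMpos.ne'
      have hnot : ¬ ∀ v, 1 ≤ cov δ q m v :=
        Nat.find_min (⟨K, hPK⟩ : ∃ t, ∀ v, 1 ≤ cov δ q t v) (by omega)
      push_neg at hnot
      obtain ⟨v, hv⟩ := hnot
      have hk := key δ q hq0 α β hδ hβ.le hq4 m v hv
      have h2 := hnbr m v
      have h0 := cov_nonneg δ q hq0 m v hδ.le
      have hMm : (M : ℝ) = (m : ℝ) + 1 := by rw [hm]; push_cast; ring
      rw [hMm]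
      have hb1 : α * cov δ q m v ≤ α * 1 := by nlinarith
      have hb2 := mul_le_mul_of_nonneg_left h2 hβ.le
      nlinarith
  -- the fractional colouring
  set w : Finset (Fin n) → ℝ := fun I => ∑ t ∈ range M, δ * q (covS δ q t) I with hwdef
  have hwnn : ∀ I, 0 ≤ w I := fun I => sum_nonneg fun t _ => by
    have := hq0 (covS δ q t) I
    positivity
  have hwsupp : ∀ I, w I ≠ 0 → I ∈ indepSets G := by
    intro I hI
    have hex : ∃ t ∈ range M, δ * q (covS δ q t) I ≠ 0 := by
      by_contra h
      push_neg at h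
      exact hI (sum_eq_zero h)
    obtain ⟨t, _, ht⟩ := hex
    have hne : q (covS δ q t) I ≠ 0 := fun h => ht (by rw [h, mul_zero])
    exact (hq2' _ I hne).2
  have hwcov : ∀ v : Fin n,
      1 ≤ ∑ I ∈ (univ : Finset (Finset (Fin n))).filter (fun I => v ∈ I), w I := by
    intro v
    have heq : ∑ I ∈ (univ : Finset (Finset (Fin n))).filter (fun I => v ∈ I), w I
        = cov δ q M v := by
      rw [cov_eq_sum, sum_comm]
      exact sum_congr rfl fun t _ => (mul_sum _ _ _).symm
    rw [heq]
    exact hPM v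
  have htot : ∑ I ∈ (univ : Finset (Finset (Fin n))), w I = (M : ℝ) * δ := by
    rw [hwdef, sum_comm]
    have hstep : ∀ t ∈ range M,
        ∑ I ∈ (univ : Finset (Finset (Fin n))), δ * q (covS δ q t) I = δ := by
      intro t _
      rw [← mul_sum, hq1, mul_one]
    rw [sum_congr rfl hstep, sum_const, card_range, nsmul_eq_mul]
  have hmem : ∑ I ∈ (univ : Finset (Finset (Fin n))), w I ∈
      { W : ℝ | ∃ w : Finset (Fin n) → ℝ, (∀ I, 0 ≤ w I) ∧
        (∀ I, w I ≠ 0 → I ∈ indepSets G) ∧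
        (∀ v : Fin n, 1 ≤ ∑ I ∈ (univ : Finset (Finset (Fin n))).filter (fun I => v ∈ I), w I) ∧
        W = ∑ I ∈ (univ : Finset (Finset (Fin n))), w I } :=
    ⟨w, hwnn, hwsupp, hwcov, rfl⟩
  have hbdd : BddBelow { W : ℝ | ∃ w : Finset (Fin n) → ℝ, (∀ I, 0 ≤ w I) ∧
      (∀ I, w I ≠ 0 → I ∈ indepSets G) ∧
      (∀ v : Fin n, 1 ≤ ∑ I ∈ (univ : Finset (Finset (Fin n))).filter (fun I => v ∈ I), w I) ∧
      W = ∑ I ∈ (univ : Finset (Finset (Fin n))), w I } := by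
    refine ⟨0, fun W hW => ?_⟩
    obtain ⟨w', hw'nn, -, -, rfl⟩ := hW
    exact sum_nonneg fun I _ => hw'nn I
  calc fracChi G ≤ ∑ I ∈ (univ : Finset (Finset (Fin n))), w I := csInf_le hbdd hmem
    _ = (M : ℝ) * δ := htot
    _ ≤ α + β * Δ + ε := hMδ
end

section
/- If g : ℝ → ℝ tends to 1 at infinity, then W(g(x)·x) − W(x) → 0 as x → ∞; that is, W((1+o(1))x) = W(x) + o(1). -/
/-- The Lambert W function: the inverse of `z ↦ z * exp z` restricted to `[-1, ∞)`. -/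
noncomputable def lambertW (y : ℝ) : ℝ :=
  Function.invFunOn (fun z : ℝ => z * Real.exp z) (Set.Ici (-1)) y

private lemma fStrict : StrictMonoOn (fun z : ℝ => z * Real.exp z) (Set.Ici (-1)) := by
  apply strictMonoOn_of_deriv_pos (convex_Ici _)
  · exact (continuous_id.mul Real.continuous_exp).continuousOn
  · intro x hx
    rw [interior_Ici] at hx
    have h : HasDerivAt (fun z : ℝ => z * Real.exp z) (1 * Real.exp x + x * Real.exp x) x :=
      (hasDerivAt_id x).mul (Real.hasDerivAt_exp x)
    rw [h.deriv]
    have : (-1 : ℝ) < x := hx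
    nlinarith [Real.exp_pos x]

private lemma exists_feq {y : ℝ} (hy : 0 ≤ y) :
    ∃ z ∈ Set.Ici (-1 : ℝ), z * Real.exp z = y := by
  have hcont : ContinuousOn (fun z : ℝ => z * Real.exp z) (Set.Icc 0 y) :=
    (continuous_id.mul Real.continuous_exp).continuousOn
  have hsub := intermediate_value_Icc hy hcont
  have hy2 : y ∈ Set.Icc ((fun z : ℝ => z * Real.exp z) 0) ((fun z : ℝ => z * Real.exp z) y) := by
    constructor
    · simpa using hy
    · simp only
      nlinarith [Real.one_le_exp hy]
  obtain ⟨z, hz, hzeq⟩ := hsub hy2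
  exact ⟨z, le_trans (by norm_num) hz.1, hzeq⟩

private lemma lambertW_spec {y : ℝ} (hy : 0 ≤ y) :
    lambertW y ∈ Set.Ici (-1 : ℝ) ∧ lambertW y * Real.exp (lambertW y) = y := by
  obtain ⟨z, hz, hzeq⟩ := exists_feq hy
  have h : ∃ a ∈ Set.Ici (-1 : ℝ), (fun z : ℝ => z * Real.exp z) a = y := ⟨z, hz, hzeq⟩
  exact ⟨Function.invFunOn_mem h, Function.invFunOn_eq h⟩

private lemma le_lambertW {a y : ℝ} (hy : 0 ≤ y) (ha : a ∈ Set.Ici (-1 : ℝ))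
    (h : a * Real.exp a ≤ y) : a ≤ lambertW y := by
  obtain ⟨hmem, heq⟩ := lambertW_spec hy
  have := fStrict.le_iff_le ha hmem
  rw [← this]
  rw [heq]; exact h

private lemma lambertW_le {a y : ℝ} (hy : 0 ≤ y) (ha : a ∈ Set.Ici (-1 : ℝ))
    (h : y ≤ a * Real.exp a) : lambertW y ≤ a := by
  obtain ⟨hmem, heq⟩ := lambertW_spec hy
  have := fStrict.le_iff_le hmem ha
  rw [← this]
  rw [heq]; exact h

theorem stmt_9 (g : ℝ → ℝ) (hg : Filter.Tendsto g Filter.atTop (nhds 1)) :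
    Filter.Tendsto (fun x : ℝ => lambertW (g x * x) - lambertW x)
      Filter.atTop (nhds 0) := by
  rw [Metric.tendsto_nhds]
  intro ε hε
  set δ := ε / 2 with hδdef
  have hδ : 0 < δ := by positivity
  have h1 : ∀ᶠ x in Filter.atTop, Real.exp (-δ) < g x :=
    hg.eventually (eventually_gt_nhds (by rw [Real.exp_lt_one_iff]; linarith))
  have h2 : ∀ᶠ x in Filter.atTop, g x < Real.exp δ :=
    hg.eventually (eventually_lt_nhds (by simpa using Real.exp_lt_exp.mpr hδ))
  have h3 : ∀ᶠ x : ℝ in Filter.atTop, δ * Real.exp δ ≤ x := Filter.eventually_ge_atTop _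
  filter_upwards [h1, h2, h3] with x hx1 hx2 hx3
  have hx0 : 0 < x := lt_of_lt_of_le (by positivity) hx3
  obtain ⟨hWmem, hWeq⟩ := lambertW_spec hx0.le
  have hWδ : δ ≤ lambertW x :=
    le_lambertW hx0.le (le_trans (by norm_num) hδ.le) hx3
  have hg0 : 0 < g x := lt_trans (Real.exp_pos _) hx1
  have hgx0 : 0 ≤ g x * x := (mul_pos hg0 hx0).le
  have hexpW : 0 < Real.exp (lambertW x) := Real.exp_pos _
  have hlow : lambertW x - δ ≤ lambertW (g x * x) := by
    apply le_lambertW hgx0 (by simp only [Set.mem_Ici]; linarith)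
    have h4 : Real.exp (lambertW x - δ) = Real.exp (lambertW x) * Real.exp (-δ) := by
      rw [← Real.exp_add]; ring_nf
    rw [h4]
    have h6 : (lambertW x - δ) * Real.exp (lambertW x) ≤ x := by
      nlinarith [mul_nonneg hδ.le hexpW.le]
    have h5 : (lambertW x - δ) * (Real.exp (lambertW x) * Real.exp (-δ)) ≤
        x * Real.exp (-δ) := by
      have := mul_le_mul_of_nonneg_right h6 (Real.exp_pos (-δ)).le
      nlinarith [this]
    calc (lambertW x - δ) * (Real.exp (lambertW x) * Real.exp (-δ)) ≤ x * Real.exp (-δ) := h5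
      _ ≤ g x * x := by nlinarith
  have hhigh : lambertW (g x * x) ≤ lambertW x + δ := by
    apply lambertW_le hgx0 (by simp only [Set.mem_Ici]; linarith)
    have h4 : Real.exp (lambertW x + δ) = Real.exp (lambertW x) * Real.exp δ := by
      rw [← Real.exp_add]
    rw [h4]
    have h5 : g x * x ≤ Real.exp δ * x := by nlinarith
    calc g x * x ≤ Real.exp δ * x := h5
      _ ≤ (lambertW x + δ) * (Real.exp (lambertW x) * Real.exp δ) := by
          have h6 : x ≤ (lambertW x + δ) * Real.exp (lambertW x) := by
            nlinarith [mul_nonneg hδ.le hexpW.le]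
          have := mul_le_mul_of_nonneg_right h6 (Real.exp_pos δ).le
          nlinarith [this]
  rw [Real.dist_eq, sub_zero]
  have : |lambertW (g x * x) - lambertW x| ≤ δ := abs_le.mpr ⟨by linarith, by linarith⟩
  linarith
end

section
/- Let G be a graph of maximum degree Δ, let f > 0 be such that the neighbourhood of every vertex of G spans at most Δ²/f edges, and let λ > 0. Let I be drawn from the hard-core model on G at fugacity λ. Then for every vertex v, α·Pr(v ∈ I) + β·E|N(v) ∩ I| ≥ (λ/(1+λ)) · min_{z ≥ 0} ( α(1+λ)^{-z} + βz(1+λ)^{-2Δ²/(fz)} ), for any α, β > 0. -/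
open Finset

namespace HC
variable {n : ℕ} (G : SimpleGraph (Fin n)) [DecidableRel G.Adj] (lam : ℝ)

/-- independent subsets of `T`. -/
def indepIn (T : Finset (Fin n)) : Finset (Finset (Fin n)) :=
  T.powerset.filter (fun s => ∀ u ∈ s, ∀ w ∈ s, ¬ G.Adj u w)

lemma mem_indepIn {T s : Finset (Fin n)} :
    s ∈ indepIn G T ↔ s ⊆ T ∧ ∀ u ∈ s, ∀ w ∈ s, ¬ G.Adj u w := by
  simp [indepIn]

noncomputable def ZT (T : Finset (Fin n)) : ℝ := ∑ s ∈ indepIn G T, lam ^ s.card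

noncomputable def WT (T : Finset (Fin n)) : ℝ :=
  ∑ s ∈ indepIn G T, lam ^ s.card * s.card

lemma ZT_nonneg (hlam : 0 < lam) (T : Finset (Fin n)) : 0 ≤ ZT G lam T :=
  Finset.sum_nonneg fun s _ => le_of_lt (pow_pos hlam _)

lemma WT_nonneg (hlam : 0 < lam) (T : Finset (Fin n)) : 0 ≤ WT G lam T :=
  Finset.sum_nonneg fun s _ => mul_nonneg (le_of_lt (pow_pos hlam _)) (Nat.cast_nonneg _)

lemma empty_mem_indepIn (T : Finset (Fin n)) : ∅ ∈ indepIn G T := by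
  simp [mem_indepIn]

lemma one_le_ZT (hlam : 0 < lam) (T : Finset (Fin n)) : 1 ≤ ZT G lam T := by
  have h := Finset.single_le_sum (f := fun s : Finset (Fin n) => lam ^ s.card)
    (fun s _ => le_of_lt (pow_pos hlam _)) (empty_mem_indepIn G T)
  simpa [ZT] using h

lemma ZT_mono (hlam : 0 < lam) {T₁ T₂ : Finset (Fin n)} (h : T₁ ⊆ T₂) :
    ZT G lam T₁ ≤ ZT G lam T₂ := by
  apply Finset.sum_le_sum_of_subset_of_nonneg
  · intro s hs
    rw [mem_indepIn] at hs ⊢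
    exact ⟨hs.1.trans h, hs.2⟩
  · intro s _ _; exact le_of_lt (pow_pos hlam _)

lemma sum_filter_mem (x : Fin n) {T : Finset (Fin n)} (hx : x ∈ T) :
    ∑ s ∈ (indepIn G T).filter (fun s => x ∈ s), lam ^ s.card
      = lam * ZT G lam ((T.erase x).filter (fun y => ¬ G.Adj x y)) := by
  rw [ZT, Finset.mul_sum]
  refine Finset.sum_nbij' (fun s => s.erase x) (fun t => insert x t) ?_ ?_ ?_ ?_ ?_
  · intro s hs
    simp only [mem_filter] at hs
    obtain ⟨hsT, hxs⟩ := hs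
    rw [mem_indepIn] at hsT ⊢
    refine ⟨?_, fun u hu w hw => hsT.2 u (Finset.mem_of_mem_erase hu) w (Finset.mem_of_mem_erase hw)⟩
    intro y hy
    have hyx := Finset.ne_of_mem_erase hy
    have hys := Finset.mem_of_mem_erase hy
    rw [Finset.mem_filter, Finset.mem_erase]
    exact ⟨⟨hyx, hsT.1 hys⟩, hsT.2 x hxs y hys⟩
  · intro t ht
    rw [mem_indepIn] at ht
    have hxt : x ∉ t := fun hxt => (Finset.mem_erase.1 (Finset.mem_filter.1 (ht.1 hxt)).1).1 rfl
    rw [Finset.mem_filter, mem_indepIn]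
    refine ⟨⟨?_, ?_⟩, Finset.mem_insert_self _ _⟩
    · intro y hy
      rcases Finset.mem_insert.1 hy with rfl | hyt
      · exact hx
      · exact Finset.mem_of_mem_erase (Finset.mem_filter.1 (ht.1 hyt)).1
    · intro u hu w hw
      rcases Finset.mem_insert.1 hu with rfl | hut <;> rcases Finset.mem_insert.1 hw with rfl | hwt
      · exact G.irrefl
      · exact (Finset.mem_filter.1 (ht.1 hwt)).2
      · exact fun hadj => (Finset.mem_filter.1 (ht.1 hut)).2 (G.adj_symm hadj)
      · exact ht.2 u hut w hwt
  · intro s hs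
    exact Finset.insert_erase (Finset.mem_filter.1 hs).2
  · intro t ht
    rw [mem_indepIn] at ht
    have hxt : x ∉ t := fun hxt => (Finset.mem_erase.1 (Finset.mem_filter.1 (ht.1 hxt)).1).1 rfl
    exact Finset.erase_insert hxt
  · intro s hs
    have hxs : x ∈ s := (Finset.mem_filter.1 hs).2
    have : (s.erase x).card + 1 = s.card := Finset.card_erase_add_one hxs
    rw [← this, pow_succ, mul_comm]

lemma ZT_split (x : Fin n) {T : Finset (Fin n)} (hx : x ∈ T) :
    ZT G lam T = ZT G lam (T.erase x)
      + lam * ZT G lam ((T.erase x).filter (fun y => ¬ G.Adj x y)) := by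
  rw [← sum_filter_mem G lam x hx, ZT]
  rw [← Finset.sum_filter_add_sum_filter_not (indepIn G T) (fun s => x ∈ s)]
  rw [add_comm]
  congr 1
  apply Finset.sum_congr _ (fun _ _ => rfl)
  ext s
  simp only [Finset.mem_filter, mem_indepIn, Finset.subset_erase]
  tauto

lemma ZT_le_L_mul (hlam : 0 < lam) (x : Fin n) {T : Finset (Fin n)} (hx : x ∈ T) :
    ZT G lam T ≤ (1 + lam) * ZT G lam (T.erase x) := by
  rw [ZT_split G lam x hx, add_mul, one_mul]
  gcongr
  exact ZT_mono G lam hlam (Finset.filter_subset _ _)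

lemma ZT_le_pow_sdiff (hlam : 0 < lam) (A T : Finset (Fin n)) :
    ZT G lam T ≤ (1 + lam) ^ A.card * ZT G lam (T \ A) := by
  classical
  induction A using Finset.induction_on with
  | empty => simpa using le_refl (ZT G lam T)
  | @insert a A ha ih =>
    rw [Finset.sdiff_insert, Finset.card_insert_of_notMem ha, pow_succ]
    by_cases haT : a ∈ T \ A
    · calc ZT G lam T ≤ (1 + lam) ^ A.card * ZT G lam (T \ A) := ih
        _ ≤ (1 + lam) ^ A.card * ((1 + lam) * ZT G lam ((T \ A).erase a)) :=
            mul_le_mul_of_nonneg_left (ZT_le_L_mul G lam hlam a haT)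
              (pow_nonneg (by linarith) _)
        _ = (1 + lam) ^ A.card * (1 + lam) * ZT G lam ((T \ A).erase a) := by ring
    · rw [Finset.erase_eq_of_notMem haT]
      calc ZT G lam T ≤ (1 + lam) ^ A.card * ZT G lam (T \ A) := ih
        _ ≤ (1 + lam) ^ A.card * (1 + lam) * ZT G lam (T \ A) := by
            have h1 : (0:ℝ) < (1+lam) ^ A.card := pow_pos (by linarith) _
            have h2 : (0:ℝ) ≤ ZT G lam (T \ A) := ZT_nonneg G lam hlam _
            nlinarith [mul_nonneg (mul_nonneg h1.le hlam.le) h2]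

lemma ZT_empty : ZT G lam ∅ = 1 := by
  simp [ZT, indepIn, Finset.powerset_empty, Finset.filter_singleton]

lemma ZT_le_pow (hlam : 0 < lam) (T : Finset (Fin n)) :
    ZT G lam T ≤ (1 + lam) ^ T.card := by
  have := ZT_le_pow_sdiff G lam hlam T T
  simpa [ZT_empty] using this

lemma WT_eq (T : Finset (Fin n)) :
    WT G lam T = ∑ w ∈ T, lam * ZT G lam ((T.erase w).filter (fun y => ¬ G.Adj w y)) := by
  have h1 : ∀ s ∈ indepIn G T, (s.card : ℝ) = ∑ w ∈ T, if w ∈ s then (1:ℝ) else 0 := by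
    intro s hs
    rw [Finset.sum_ite_mem]
    rw [Finset.inter_eq_right.2 ((mem_indepIn G).1 hs).1]
    simp
  calc WT G lam T = ∑ s ∈ indepIn G T, ∑ w ∈ T, (if w ∈ s then lam ^ s.card else 0) := by
        apply Finset.sum_congr rfl
        intro s hs
        rw [h1 s hs, Finset.mul_sum]
        apply Finset.sum_congr rfl
        intro w _
        by_cases h : w ∈ s <;> simp [h]
    _ = ∑ w ∈ T, ∑ s ∈ indepIn G T, (if w ∈ s then lam ^ s.card else 0) := Finset.sum_comm
    _ = ∑ w ∈ T, lam * ZT G lam ((T.erase w).filter (fun y => ¬ G.Adj w y)) := by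
        apply Finset.sum_congr rfl
        intro w hw
        rw [← sum_filter_mem G lam w hw, Finset.sum_filter]

end HC

namespace HC2
variable {n : ℕ} (G : SimpleGraph (Fin n)) [DecidableRel G.Adj]

lemma sum_deg_le (v : Fin n) {U : Finset (Fin n)} (hU : U ⊆ G.neighborFinset v) :
    ∑ w ∈ U, (U.filter (G.Adj w)).card
      ≤ 2 * (G.edgeFinset.filter fun e => ∀ x ∈ e, G.Adj v x).card := by
  classical
  set P : Finset (Fin n × Fin n) := (U ×ˢ U).filter (fun p => G.Adj p.1 p.2) with hP
  have hcard : ∑ w ∈ U, (U.filter (G.Adj w)).card = P.card := by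
    rw [Finset.card_eq_sum_card_fiberwise (f := Prod.fst) (t := U)
      (fun p hp => (Finset.mem_product.1 (Finset.mem_filter.1 hp).1).1)]
    apply Finset.sum_congr rfl
    intro w hw
    apply Finset.card_nbij' (fun y => (w, y)) (fun p => p.2)
    · intro y hy
      simp only [Finset.mem_coe, Finset.mem_filter] at hy
      simp only [hP, Finset.mem_coe, Finset.mem_filter, Finset.mem_product]
      exact ⟨⟨⟨hw, hy.1⟩, hy.2⟩, trivial⟩
    · intro p hp
      simp only [hP, Finset.mem_coe, Finset.mem_filter, Finset.mem_product] at hp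
      obtain ⟨⟨⟨_, h2⟩, h3⟩, h4⟩ := hp
      subst h4
      exact Finset.mem_filter.2 ⟨h2, h3⟩
    · intro y _
      rfl
    · intro p hp
      simp only [hP, Finset.mem_coe, Finset.mem_filter, Finset.mem_product] at hp
      obtain ⟨⟨⟨_, _⟩, _⟩, h4⟩ := hp
      simp [← h4]
  rw [hcard]
  have hfib : ∀ e ∈ P.image (fun p => s(p.1, p.2)),
      (P.filter fun p => s(p.1, p.2) = e).card ≤ 2 := by
    intro e he
    obtain ⟨q, hq, rfl⟩ := Finset.mem_image.1 he
    have hsub : (P.filter fun p => s(p.1, p.2) = s(q.1, q.2)) ⊆ {q, q.swap} := by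
      intro p hp
      have h := (Finset.mem_filter.1 hp).2
      rw [Sym2.eq_iff] at h
      rcases h with ⟨h1, h2⟩ | ⟨h1, h2⟩
      · simp [Finset.mem_insert, Prod.ext_iff, h1, h2]
      · simp [Finset.mem_insert, Prod.ext_iff, Prod.swap, h1, h2]
    calc (P.filter fun p => s(p.1, p.2) = s(q.1, q.2)).card ≤ ({q, q.swap} : Finset _).card :=
          Finset.card_le_card hsub
      _ ≤ 2 := Finset.card_insert_le _ _ |>.trans (by simp)
  have h1 : P.card ≤ 2 * (P.image (fun p => s(p.1, p.2))).card :=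
    Finset.card_le_mul_card_image P 2 hfib
  have h2 : P.image (fun p => s(p.1, p.2)) ⊆
      G.edgeFinset.filter fun e => ∀ x ∈ e, G.Adj v x := by
    intro e he
    obtain ⟨q, hq, rfl⟩ := Finset.mem_image.1 he
    simp only [hP, Finset.mem_filter, Finset.mem_product] at hq
    obtain ⟨⟨hq1, hq2⟩, hq3⟩ := hq
    rw [Finset.mem_filter, SimpleGraph.mem_edgeFinset]
    refine ⟨hq3, ?_⟩
    intro x hx
    rw [Sym2.mem_iff] at hx
    rcases hx with rfl | rfl
    · simpa using hU hq1
    · simpa using hU hq2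
  exact h1.trans (Nat.mul_le_mul_left 2 (Finset.card_le_card h2))

end HC2

namespace HC3

/-- `z (λ+Z) ≤ u Z` for `z = log_L ((λ+Z)/L)`, given `1 ≤ Z ≤ L^u`. -/
lemma aux_iii {lam Z uR : ℝ} (hlam : 0 < lam) (hZ1 : 1 ≤ Z) (huR : 0 ≤ uR)
    (hZle : Z ≤ (1 + lam) ^ uR) :
    Real.logb (1 + lam) ((lam + Z) / (1 + lam)) * (lam + Z) ≤ uR * Z := by
  set L := 1 + lam with hLdef
  have hL1 : 1 < L := by rw [hLdef]; linarith
  have hL0 : 0 < L := by linarith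
  have hZ0 : (0:ℝ) < Z := by linarith
  have hlamZ : (0:ℝ) < lam + Z := by linarith
  have hlogL : 0 < Real.log L := Real.log_pos hL1
  set a := lam / (lam + Z) with hadef
  have ha0 : 0 ≤ a := by positivity
  have ha1 : a ≤ 1 := by rw [hadef, div_le_one hlamZ]; linarith
  have hbern : Z ^ a ≤ 1 + a * (Z - 1) := by
    have h := rpow_one_add_le_one_add_mul_self (s := Z - 1) (by linarith) ha0 ha1
    simpa using h
  have h2 : 1 + a * (Z - 1) = L * Z / (lam + Z) := by
    rw [hadef, hLdef]; field_simp; ring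
  have hZa : a * Real.log Z ≤ Real.log (L * Z / (lam + Z)) := by
    have h := Real.log_le_log (Real.rpow_pos_of_pos hZ0 a) (hbern.trans_eq h2)
    rwa [Real.log_rpow hZ0] at h
  have e1 : Real.log (L * Z / (lam + Z)) = Real.log L + Real.log Z - Real.log (lam + Z) := by
    rw [Real.log_div (by positivity) (by positivity), Real.log_mul (by positivity) (by positivity)]
  have e2 : Real.log ((lam + Z) / L) = Real.log (lam + Z) - Real.log L :=
    Real.log_div (by positivity) (by positivity)
  have e3 : (1 - a) * Real.log Z = Z / (lam + Z) * Real.log Z := by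
    rw [hadef]; field_simp; ring
  have hlog : Real.log ((lam + Z) / L) ≤ Z / (lam + Z) * Real.log Z := by
    rw [e2, ← e3]; rw [e1] at hZa; linarith
  have hlogZ : Real.log Z ≤ uR * Real.log L := by
    have h := Real.log_le_log hZ0 hZle
    rwa [Real.log_rpow hL0] at h
  have hfin : Real.log ((lam + Z) / L) ≤ Z / (lam + Z) * (uR * Real.log L) :=
    hlog.trans (mul_le_mul_of_nonneg_left hlogZ (by positivity))
  have hlogb : Real.logb L ((lam + Z) / L) ≤ Z / (lam + Z) * uR := by
    rw [Real.logb, div_le_iff₀ hlogL]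
    calc Real.log ((lam + Z) / L) ≤ Z / (lam + Z) * (uR * Real.log L) := hfin
      _ = Z / (lam + Z) * uR * Real.log L := by ring
  calc Real.logb L ((lam + Z) / L) * (lam + Z) ≤ Z / (lam + Z) * uR * (lam + Z) :=
        mul_le_mul_of_nonneg_right hlogb hlamZ.le
    _ = uR * Z := by field_simp

/-- Jensen: `u * L^(-(D/u) - 1) ≤ ∑ L^(-(d_w+1))` when `∑ d_w = D`. -/
lemma aux_jensen {ι : Type*} (s : Finset ι) (d : ι → ℕ) {L : ℝ} (hL1 : 1 < L)
    (hs : s.Nonempty) :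
    (s.card : ℝ) * L ^ (-((∑ w ∈ s, (d w : ℝ)) / s.card) - 1)
      ≤ ∑ w ∈ s, L ^ (-((d w : ℝ)) - 1) := by
  have hL0 : (0:ℝ) < L := by linarith
  have hu0 : (0:ℝ) < s.card := by exact_mod_cast Finset.card_pos.2 hs
  have hgm := Real.geom_mean_le_arith_mean_weighted s (fun _ => ((s.card:ℝ))⁻¹)
    (fun w => L ^ (-((d w : ℝ)) - 1)) (fun _ _ => by positivity)
    (by rw [Finset.sum_const, nsmul_eq_mul]; field_simp)
    (fun w _ => by positivity)
  have hexp : ∀ y : ℝ, L ^ y = Real.exp (y * Real.log L) := fun y => by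
    rw [Real.rpow_def_of_pos hL0, mul_comm]
  have hprod : ∏ w ∈ s, (L ^ (-((d w : ℝ)) - 1)) ^ ((s.card:ℝ))⁻¹
      = L ^ (-((∑ w ∈ s, (d w : ℝ)) / s.card) - 1) := by
    have : ∀ w ∈ s, (L ^ (-((d w : ℝ)) - 1)) ^ ((s.card:ℝ))⁻¹
        = Real.exp ((-((d w : ℝ)) - 1) * (s.card:ℝ)⁻¹ * Real.log L) := by
      intro w _
      rw [hexp, ← Real.exp_log (x := (Real.exp _) ^ ((s.card:ℝ))⁻¹) (by positivity),
        Real.log_rpow (by positivity), Real.log_exp]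
      ring_nf
    rw [Finset.prod_congr rfl this, ← Real.exp_sum, hexp]
    congr 1
    rw [← Finset.sum_mul, ← Finset.sum_mul]
    have : ∑ w ∈ s, (-((d w : ℝ)) - 1) = -(∑ w ∈ s, (d w : ℝ)) - s.card := by
      rw [Finset.sum_sub_distrib, ← Finset.sum_neg_distrib, Finset.sum_const, nsmul_eq_mul]
      push_cast; ring
    rw [this]
    field_simp
  rw [hprod] at hgm
  have : ∑ w ∈ s, ((s.card:ℝ))⁻¹ * L ^ (-((d w : ℝ)) - 1)
      = ((s.card:ℝ))⁻¹ * ∑ w ∈ s, L ^ (-((d w : ℝ)) - 1) := by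
    rw [Finset.mul_sum]
  rw [this] at hgm
  calc (s.card : ℝ) * L ^ (-((∑ w ∈ s, (d w : ℝ)) / s.card) - 1)
      ≤ (s.card : ℝ) * (((s.card:ℝ))⁻¹ * ∑ w ∈ s, L ^ (-((d w : ℝ)) - 1)) :=
        mul_le_mul_of_nonneg_left hgm hu0.le
    _ = ∑ w ∈ s, L ^ (-((d w : ℝ)) - 1) := by field_simp

end HC3

namespace HC
open HC2 HC3

lemma key {n : ℕ} (G : SimpleGraph (Fin n)) [DecidableRel G.Adj]
    {lam α β f : ℝ} (hlam : 0 < lam) (hα : 0 < α) (hβ : 0 < β) (hf : 0 < f) {Δ : ℕ} {v : Fin n}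
    (hnb : ((G.edgeFinset.filter fun e => ∀ x ∈ e, G.Adj v x).card : ℝ) ≤ (Δ : ℝ) ^ 2 / f)
    {U : Finset (Fin n)} (hU : U ⊆ G.neighborFinset v) :
    lam / (1 + lam) *
      sInf ((fun z : ℝ =>
          α * (1 + lam) ^ (-z) + β * z * (1 + lam) ^ (-(2 * (Δ : ℝ) ^ 2 / (f * z)))) ''
        Set.Ici 0) * (lam + ZT G lam U) ≤ α * lam + β * WT G lam U := by
  have hL1 : 1 < 1 + lam := by linarith
  have hL0 : (0:ℝ) < 1 + lam := by linarith
  set L := 1 + lam with hLdef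
  set Z := ZT G lam U with hZdef
  have hZ1 : 1 ≤ Z := one_le_ZT G lam hlam U
  clear_value L Z
  have hlamZ : (0:ℝ) < lam + Z := by linarith
  set z := Real.logb L ((lam + Z) / L) with hzdef
  clear_value z
  have harg0 : 0 < (lam + Z) / L := by positivity
  have harg : 1 ≤ (lam + Z) / L := by rw [le_div_iff₀ hL0]; linarith
  have hz0 : 0 ≤ z := by rw [hzdef]; exact Real.logb_nonneg hL1 harg
  have hLz : L ^ z = (lam + Z) / L := by rw [hzdef]; exact Real.rpow_logb hL0 (ne_of_gt hL1) harg0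
  have hWT0 : 0 ≤ WT G lam U := WT_nonneg G lam hlam U
  have hbdd : BddBelow ((fun z : ℝ =>
      α * L ^ (-z) + β * z * L ^ (-(2 * (Δ : ℝ) ^ 2 / (f * z)))) '' Set.Ici 0) := by
    refine ⟨0, ?_⟩
    rintro y ⟨x, hx, rfl⟩
    have hx0 : (0:ℝ) ≤ x := hx
    have h1 : (0:ℝ) ≤ α * L ^ (-x) := by positivity
    have h2 : (0:ℝ) ≤ β * x * L ^ (-(2 * (Δ : ℝ) ^ 2 / (f * x))) := by positivity
    linarith
  have hc : lam / L *
      sInf ((fun z : ℝ =>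
        α * L ^ (-z) + β * z * L ^ (-(2 * (Δ : ℝ) ^ 2 / (f * z)))) '' Set.Ici 0) * (lam + Z)
      ≤ lam / L * (α * L ^ (-z) + β * z * L ^ (-(2 * (Δ : ℝ) ^ 2 / (f * z)))) * (lam + Z) := by
    have h := csInf_le hbdd (Set.mem_image_of_mem _ hz0)
    have h0 : (0:ℝ) ≤ lam / L := by positivity
    exact mul_le_mul_of_nonneg_right (mul_le_mul_of_nonneg_left h h0) hlamZ.le
  refine hc.trans ?_
  have hterm1 : lam / L * (α * L ^ (-z)) * (lam + Z) = α * lam := by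
    rw [Real.rpow_neg hL0.le, hLz, inv_div]
    field_simp
  have hsplit : lam / L * (α * L ^ (-z) + β * z * L ^ (-(2 * (Δ : ℝ) ^ 2 / (f * z)))) * (lam + Z)
      = α * lam + lam / L * (β * z * L ^ (-(2 * (Δ : ℝ) ^ 2 / (f * z)))) * (lam + Z) := by
    rw [← hterm1]; ring
  rw [hsplit]
  refine add_le_add le_rfl ?_
  rcases eq_or_lt_of_le hz0 with hz | hzpos
  · rw [← hz]
    simpa using mul_nonneg hβ.le hWT0
  -- main case : z > 0
  have hUne : U.Nonempty := by
    rcases Finset.eq_empty_or_nonempty U with rfl | h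
    · exfalso
      have hZe : Z = 1 := by rw [hZdef, ZT_empty]
      have harg1 : (lam + Z) / L = 1 := by rw [hZe, hLdef]; field_simp; ring
      rw [hzdef, harg1, Real.logb_one] at hzpos
      exact lt_irrefl _ hzpos
    · exact h
  set u := U.card with hudef
  clear_value u
  have hu0 : (0:ℝ) < (u:ℝ) := by rw [hudef]; exact_mod_cast Finset.card_pos.2 hUne
  have hZle : Z ≤ L ^ ((u:ℕ):ℝ) := by
    rw [Real.rpow_natCast, hudef, hZdef, hLdef]; exact ZT_le_pow G lam hlam U
  have hzu : z ≤ (u:ℝ) := by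
    rw [hzdef, Real.logb_le_iff_le_rpow hL1 harg0]
    calc (lam + Z) / L ≤ Z := by
          rw [div_le_iff₀ hL0]
          have hZL : Z * L = Z + Z * lam := by rw [hLdef]; ring
          have hmul : lam ≤ Z * lam := by nlinarith [mul_nonneg (by linarith : (0:ℝ) ≤ Z - 1) hlam.le]
          linarith
      _ ≤ L ^ ((u:ℕ):ℝ) := hZle
  have hiii : z * (lam + Z) ≤ (u:ℝ) * Z := by
    rw [hzdef, hLdef]
    exact aux_iii hlam hZ1 hu0.le (by rw [← hLdef]; exact hZle)
  set D := ∑ w ∈ U, (U.filter (G.Adj w)).card with hDdef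
  clear_value D
  have hD : (D:ℝ) ≤ 2 * ((Δ:ℝ)^2 / f) := by
    have h := sum_deg_le G v hU
    have h' : (D:ℝ) ≤ 2 * ((G.edgeFinset.filter fun e => ∀ x ∈ e, G.Adj v x).card : ℝ) := by
      rw [hDdef]; exact_mod_cast h
    linarith [hnb]
  have hE : (D:ℝ) / (u:ℝ) ≤ 2 * (Δ:ℝ)^2 / (f * z) := by
    have h1 : (D:ℝ) / (u:ℝ) ≤ (2 * ((Δ:ℝ)^2 / f)) / z :=
      div_le_div₀ (by positivity) hD hzpos hzu
    have h2 : (2 * ((Δ:ℝ)^2 / f)) / z = 2 * (Δ:ℝ)^2 / (f * z) := by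
      field_simp
    linarith [h2.symm.le]
  have hLE : L ^ (-(2 * (Δ:ℝ)^2 / (f * z))) ≤ L ^ (-((D:ℝ) / (u:ℝ))) :=
    Real.rpow_le_rpow_of_exponent_le hL1.le (by linarith)
  -- lower bound for WT
  have hW : lam * Z * ((u:ℝ) * L ^ (-((D:ℝ) / (u:ℝ)) - 1)) ≤ WT G lam U := by
    rw [WT_eq]
    have hterm : ∀ w ∈ U, lam * Z * L ^ (-(((U.filter (G.Adj w)).card : ℝ)) - 1)
        ≤ lam * ZT G lam ((U.erase w).filter (fun y => ¬ G.Adj w y)) := by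
      intro w hw
      set V := (U.erase w).filter (fun y => ¬ G.Adj w y) with hVdef
      have hVU : V ⊆ U := (Finset.filter_subset _ _).trans (Finset.erase_subset _ _)
      have hsd : U \ (U \ V) = V := Finset.sdiff_sdiff_eq_self hVU
      have hZV : Z ≤ L ^ ((U \ V).card) * ZT G lam V := by
        rw [hZdef, hLdef]
        have h := ZT_le_pow_sdiff G lam hlam (U \ V) U
        rwa [hsd] at h
      have hfeq : (U.erase w).filter (G.Adj w) = U.filter (G.Adj w) := by
        ext y
        simp only [Finset.mem_filter, Finset.mem_erase]
        constructor
        · rintro ⟨⟨-, hy⟩, ha⟩; exact ⟨hy, ha⟩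
        · rintro ⟨hy, ha⟩; exact ⟨⟨(G.ne_of_adj ha).symm, hy⟩, ha⟩
      have hsplitcard : ((U.erase w).filter (G.Adj w)).card + V.card = (U.erase w).card :=
        Finset.card_filter_add_card_filter_not _
      have hu1 : 1 ≤ u := by rw [hudef]; exact Finset.card_pos.2 hUne
      have hdcard : (U \ V).card = (U.filter (G.Adj w)).card + 1 := by
        rw [Finset.card_sdiff_of_subset hVU]
        rw [hfeq] at hsplitcard
        have hec : (U.erase w).card = u - 1 := by rw [hudef]; exact Finset.card_erase_of_mem hw
        have hVle : V.card ≤ (U.erase w).card := Finset.card_le_card (Finset.filter_subset _ _)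
        omega
      have hpow : L ^ (-(((U.filter (G.Adj w)).card : ℝ)) - 1) = (L ^ ((U \ V).card : ℕ))⁻¹ := by
        rw [← Real.rpow_natCast L ((U \ V).card), ← Real.rpow_neg hL0.le]
        congr 1
        rw [hdcard]
        push_cast
        ring
      rw [hpow]
      have hLpow : (0:ℝ) < L ^ ((U \ V).card : ℕ) := pow_pos hL0 _
      have hZV' : Z * (L ^ ((U \ V).card : ℕ))⁻¹ ≤ ZT G lam V := by
        rw [← div_eq_mul_inv, div_le_iff₀ hLpow, mul_comm]
        exact hZV
      calc lam * Z * (L ^ ((U \ V).card : ℕ))⁻¹ = lam * (Z * (L ^ ((U \ V).card : ℕ))⁻¹) := by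
            ring
        _ ≤ lam * ZT G lam V := mul_le_mul_of_nonneg_left hZV' hlam.le
    have hZnn : (0:ℝ) ≤ Z := by linarith
    calc lam * Z * ((u:ℝ) * L ^ (-((D:ℝ) / (u:ℝ)) - 1))
        ≤ lam * Z * (∑ w ∈ U, L ^ (-(((U.filter (G.Adj w)).card : ℝ)) - 1)) := by
          refine mul_le_mul_of_nonneg_left ?_ (by positivity)
          have hj := aux_jensen U (fun w => (U.filter (G.Adj w)).card) hL1 hUne
          have hcast : ((D:ℕ):ℝ) = ∑ w ∈ U, (((U.filter (G.Adj w)).card : ℕ):ℝ) := by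
            rw [hDdef]; push_cast; ring
          rw [hcast, hudef]
          simpa using hj
      _ = ∑ w ∈ U, lam * Z * L ^ (-(((U.filter (G.Adj w)).card : ℝ)) - 1) := by
          rw [Finset.mul_sum]
      _ ≤ ∑ w ∈ U, lam * ZT G lam ((U.erase w).filter (fun y => ¬ G.Adj w y)) :=
          Finset.sum_le_sum hterm
  -- final assembly
  have hcore : z * (lam + Z) * L ^ (-(2 * (Δ:ℝ)^2 / (f * z))) ≤ ((u:ℝ) * Z) * L ^ (-((D:ℝ) / (u:ℝ))) :=
    mul_le_mul hiii hLE (Real.rpow_nonneg hL0.le _) (by positivity)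
  have hrw : lam / L * (β * z * L ^ (-(2 * (Δ:ℝ)^2 / (f * z)))) * (lam + Z)
      = β * (lam / L * (z * (lam + Z) * L ^ (-(2 * (Δ:ℝ)^2 / (f * z))))) := by ring
  have hrw2 : β * (lam / L * (((u:ℝ) * Z) * L ^ (-((D:ℝ) / (u:ℝ))))) 
      = β * (lam * Z * ((u:ℝ) * L ^ (-((D:ℝ) / (u:ℝ)) - 1))) := by
    rw [Real.rpow_sub hL0, Real.rpow_one]
    ring
  rw [hrw]
  calc β * (lam / L * (z * (lam + Z) * L ^ (-(2 * (Δ:ℝ)^2 / (f * z)))))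
      ≤ β * (lam / L * (((u:ℝ) * Z) * L ^ (-((D:ℝ) / (u:ℝ))))) := by
        refine mul_le_mul_of_nonneg_left (mul_le_mul_of_nonneg_left hcore (by positivity)) hβ.le
    _ = β * (lam * Z * ((u:ℝ) * L ^ (-((D:ℝ) / (u:ℝ)) - 1))) := hrw2
    _ ≤ β * WT G lam U := mul_le_mul_of_nonneg_left hW hβ.le

end HC

namespace HC

lemma mem_indepSets {n : ℕ} {G : SimpleGraph (Fin n)} [DecidableRel G.Adj] {I : Finset (Fin n)} :
    I ∈ indepSets G ↔ ∀ a ∈ I, ∀ b ∈ I, ¬ G.Adj a b := by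
  simp [indepSets]

lemma fiber_eq {n : ℕ} (G : SimpleGraph (Fin n)) [DecidableRel G.Adj] (v : Fin n)
    {J : Finset (Fin n)} (hJind : ∀ a ∈ J, ∀ b ∈ J, ¬ G.Adj a b)
    (hJK : Disjoint J (insert v (G.neighborFinset v))) :
    (indepSets G).filter (fun I => I \ (insert v (G.neighborFinset v)) = J)
      = (insert {v} (indepIn G
          ((G.neighborFinset v).filter (fun w => ∀ x ∈ J, ¬ G.Adj x w)))).image
          (fun s => J ∪ s) := by
  classical
  set N := G.neighborFinset v with hN
  set K := insert v N with hK
  set U := N.filter (fun w => ∀ x ∈ J, ¬ G.Adj x w) with hUdef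
  have hvK : v ∈ K := Finset.mem_insert_self _ _
  have hNK : N ⊆ K := Finset.subset_insert _ _
  have hUN : U ⊆ N := Finset.filter_subset _ _
  have hvN : v ∉ N := by simp [hN]
  have hvJ : v ∉ J := fun h => Finset.disjoint_left.1 hJK h hvK
  have hJN : ∀ j ∈ J, j ∉ K := fun j hj => Finset.disjoint_left.1 hJK hj
  ext I
  simp only [Finset.mem_filter, Finset.mem_image, Finset.mem_insert]
  constructor
  · rintro ⟨hI, hIK⟩
    have hind : ∀ a ∈ I, ∀ b ∈ I, ¬ G.Adj a b := mem_indepSets.1 hI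
    have hJI : J ⊆ I := by rw [← hIK]; exact Finset.sdiff_subset
    by_cases hv : v ∈ I
    · refine ⟨{v}, Or.inl rfl, ?_⟩
      have hIKv : I ∩ K = {v} := by
        ext x
        simp only [Finset.mem_inter, Finset.mem_singleton]
        constructor
        · rintro ⟨hxI, hxK⟩
          rcases Finset.mem_insert.1 hxK with rfl | hxN
          · rfl
          · exact absurd ((SimpleGraph.mem_neighborFinset _ _ _).1 hxN) (hind v hv x hxI)
        · rintro rfl; exact ⟨hv, hvK⟩
      rw [← hIK, ← hIKv]
      exact Finset.sdiff_union_inter I K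
    · refine ⟨I ∩ K, Or.inr ?_, ?_⟩
      · rw [mem_indepIn]
        constructor
        · intro x hx
          obtain ⟨hxI, hxK⟩ := Finset.mem_inter.1 hx
          have hxN : x ∈ N := by
            rcases Finset.mem_insert.1 hxK with rfl | hxN
            · exact absurd hxI hv
            · exact hxN
          rw [hUdef, Finset.mem_filter]
          exact ⟨hxN, fun j hj => hind j (hJI hj) x hxI⟩
        · intro a ha b hb
          exact hind a (Finset.mem_of_mem_inter_left ha) b (Finset.mem_of_mem_inter_left hb)
      · rw [← hIK]
        exact Finset.sdiff_union_inter I K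
  · rintro ⟨s, hs | hs, rfl⟩
    · subst hs
      constructor
      · rw [mem_indepSets]
        intro a ha b hb
        rcases Finset.mem_union.1 ha with haJ | hav <;> rcases Finset.mem_union.1 hb with hbJ | hbv
        · exact hJind a haJ b hbJ
        · rw [Finset.mem_singleton] at hbv; subst hbv
          intro hadj
          exact hJN a haJ (hNK ((SimpleGraph.mem_neighborFinset _ _ _).2 (G.adj_symm hadj)))
        · rw [Finset.mem_singleton] at hav; subst hav
          intro hadj
          exact hJN b hbJ (hNK ((SimpleGraph.mem_neighborFinset _ _ _).2 hadj))
        · rw [Finset.mem_singleton] at hav hbv; subst hav; subst hbv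
          exact G.irrefl
      · rw [Finset.union_sdiff_distrib]
        have h1 : J \ K = J := Finset.sdiff_eq_self_iff_disjoint.2 hJK
        have h2 : {v} \ K = ∅ := by
          rw [Finset.sdiff_eq_empty_iff_subset]
          exact Finset.singleton_subset_iff.2 hvK
        rw [h1, h2, Finset.union_empty]
    · have hsU : s ⊆ U := (mem_indepIn G).1 hs |>.1
      have hsind := (mem_indepIn G).1 hs |>.2
      constructor
      · rw [mem_indepSets]
        intro a ha b hb
        rcases Finset.mem_union.1 ha with haJ | has <;> rcases Finset.mem_union.1 hb with hbJ | hbs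
        · exact hJind a haJ b hbJ
        · exact (Finset.mem_filter.1 (hsU hbs)).2 a haJ
        · intro hadj
          exact (Finset.mem_filter.1 (hsU has)).2 b hbJ (G.adj_symm hadj)
        · exact hsind a has b hbs
      · rw [Finset.union_sdiff_distrib]
        have h1 : J \ K = J := Finset.sdiff_eq_self_iff_disjoint.2 hJK
        have h2 : s \ K = ∅ := by
          rw [Finset.sdiff_eq_empty_iff_subset]
          exact hsU.trans (hUN.trans hNK)
        rw [h1, h2, Finset.union_empty]

end HC

theorem stmt_10 (n : ℕ) (G : SimpleGraph (Fin n)) [DecidableRel G.Adj]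
    (Δ : ℕ) (hΔ : ∀ v, G.degree v ≤ Δ) (f : ℝ) (hf : 0 < f)
    (hnbhd : ∀ v : Fin n,
      ((G.edgeFinset.filter fun e => ∀ x ∈ e, G.Adj v x).card : ℝ) ≤ (Δ : ℝ) ^ 2 / f)
    (lam α β : ℝ) (hlam : 0 < lam) (hα : 0 < α) (hβ : 0 < β) (v : Fin n) :
    α * ((∑ I ∈ (indepSets G).filter (fun I => v ∈ I), lam ^ I.card) / hcZ G lam) +
      β * ((∑ I ∈ indepSets G,
              lam ^ I.card * ((I ∩ G.neighborFinset v).card : ℝ)) / hcZ G lam) ≥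
    lam / (1 + lam) *
      sInf ((fun z : ℝ =>
          α * (1 + lam) ^ (-z) + β * z * (1 + lam) ^ (-(2 * (Δ : ℝ) ^ 2 / (f * z)))) ''
        Set.Ici 0) := by
  classical
  open HC HC2 HC3 in
  set c := sInf ((fun z : ℝ =>
      α * (1 + lam) ^ (-z) + β * z * (1 + lam) ^ (-(2 * (Δ : ℝ) ^ 2 / (f * z)))) ''
    Set.Ici 0) with hcdef
  clear_value c
  have hZg : 0 < hcZ G lam := by
    apply Finset.sum_pos (fun I _ => pow_pos hlam _)
    exact ⟨∅, by simp [indepSets]⟩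
  rw [ge_iff_le]
  have hrw : α * ((∑ I ∈ (indepSets G).filter (fun I => v ∈ I), lam ^ I.card) / hcZ G lam) +
      β * ((∑ I ∈ indepSets G,
        lam ^ I.card * ((I ∩ G.neighborFinset v).card : ℝ)) / hcZ G lam)
      = (α * (∑ I ∈ (indepSets G).filter (fun I => v ∈ I), lam ^ I.card) +
         β * (∑ I ∈ indepSets G,
           lam ^ I.card * ((I ∩ G.neighborFinset v).card : ℝ))) / hcZ G lam := by
    field_simp
  rw [hrw, le_div_iff₀ hZg]
  -- rewrite the numerator as a single sum over indepSets
  have hS1 : ∑ I ∈ (indepSets G).filter (fun I => v ∈ I), lam ^ I.card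
      = ∑ I ∈ indepSets G, (if v ∈ I then lam ^ I.card else 0) :=
    Finset.sum_filter _ _
  have hnum : α * (∑ I ∈ (indepSets G).filter (fun I => v ∈ I), lam ^ I.card) +
      β * (∑ I ∈ indepSets G, lam ^ I.card * ((I ∩ G.neighborFinset v).card : ℝ))
      = ∑ I ∈ indepSets G, (α * (if v ∈ I then lam ^ I.card else 0) +
          β * (lam ^ I.card * ((I ∩ G.neighborFinset v).card : ℝ))) := by
    rw [hS1, Finset.sum_add_distrib, ← Finset.mul_sum, ← Finset.mul_sum]
  rw [hnum, hcZ]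
  -- fiber decomposition
  set K := insert v (G.neighborFinset v) with hK
  have hmaps : ∀ I ∈ indepSets G, I \ K ∈ (indepSets G).image (fun I => I \ K) :=
    fun I hI => Finset.mem_image_of_mem _ hI
  rw [← Finset.sum_fiberwise_of_maps_to hmaps (fun I => lam ^ I.card),
    ← Finset.sum_fiberwise_of_maps_to hmaps (fun I => α * (if v ∈ I then lam ^ I.card else 0) +
      β * (lam ^ I.card * ((I ∩ G.neighborFinset v).card : ℝ))),
    Finset.mul_sum]
  apply Finset.sum_le_sum
  intro J hJmem
  obtain ⟨I₀, hI₀, hJ⟩ := Finset.mem_image.1 hJmem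
  have hJind : ∀ a ∈ J, ∀ b ∈ J, ¬ G.Adj a b := by
    rw [← hJ]
    intro a ha b hb
    exact mem_indepSets.1 hI₀ a (Finset.sdiff_subset ha) b (Finset.sdiff_subset hb)
  have hJK : Disjoint J K := by rw [← hJ]; exact Finset.sdiff_disjoint
  set U := (G.neighborFinset v).filter (fun w => ∀ x ∈ J, ¬ G.Adj x w) with hUdef
  have hUN : U ⊆ G.neighborFinset v := Finset.filter_subset _ _
  have hfe := fiber_eq G v hJind hJK
  rw [← hK, ← hUdef] at hfe
  rw [hfe]
  -- injectivity
  have hsubK : ∀ s ∈ insert {v} (indepIn G U), s ⊆ K := by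
    intro s hs
    rcases Finset.mem_insert.1 hs with rfl | hs
    · exact Finset.singleton_subset_iff.2 (Finset.mem_insert_self _ _)
    · exact (((mem_indepIn G).1 hs).1.trans hUN).trans (Finset.subset_insert _ _)
  have hinj : ∀ s₁ ∈ insert {v} (indepIn G U), ∀ s₂ ∈ insert {v} (indepIn G U),
      J ∪ s₁ = J ∪ s₂ → s₁ = s₂ := by
    intro s₁ h₁ s₂ h₂ heq
    have key : ∀ s ∈ insert {v} (indepIn G U), (J ∪ s) ∩ K = s := by
      intro s hs
      rw [Finset.union_inter_distrib_right, Finset.disjoint_iff_inter_eq_empty.1 hJK,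
        Finset.inter_eq_left.2 (hsubK s hs), Finset.empty_union]
    rw [← key s₁ h₁, ← key s₂ h₂, heq]
  rw [Finset.sum_image hinj, Finset.sum_image hinj]
  -- {v} is not a local independent set
  have hvU : v ∉ U := by
    intro h
    have := hUN h
    simp at this
  have hnm : ({v} : Finset (Fin n)) ∉ indepIn G U := by
    intro h
    exact hvU (((mem_indepIn G).1 h).1 (Finset.mem_singleton_self v))
  rw [Finset.sum_insert hnm, Finset.sum_insert hnm]
  -- card computations
  have hdisj : ∀ s ⊆ K, Disjoint J s := fun s hs => hJK.mono_right hs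
  have hcardv : (J ∪ {v}).card = J.card + 1 := by
    rw [Finset.card_union_of_disjoint (hdisj _ (Finset.singleton_subset_iff.2
      (Finset.mem_insert_self _ _)))]
    simp
  have hvJ : v ∉ J := fun h => Finset.disjoint_left.1 hJK h (Finset.mem_insert_self _ _)
  have hJN : Disjoint J (G.neighborFinset v) := hJK.mono_right (Finset.subset_insert _ _)
  have hvN : v ∉ G.neighborFinset v := by simp
  -- evaluate the three sums
  have hZeq : ∑ s ∈ indepIn G U, lam ^ (J ∪ s).card = lam ^ J.card * ZT G lam U := by
    rw [ZT, Finset.mul_sum]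
    apply Finset.sum_congr rfl
    intro s hs
    rw [Finset.card_union_of_disjoint (hdisj s ((((mem_indepIn G).1 hs).1.trans hUN).trans
      (Finset.subset_insert _ _))), pow_add]
  have hg1 : α * (if v ∈ J ∪ {v} then lam ^ (J ∪ {v}).card else 0) +
      β * (lam ^ (J ∪ {v}).card * (((J ∪ {v}) ∩ G.neighborFinset v).card : ℝ))
      = α * lam ^ (J.card + 1) := by
    have hvmem : v ∈ J ∪ {v} := Finset.mem_union_right _ (Finset.mem_singleton_self v)
    have hint : (J ∪ {v}) ∩ G.neighborFinset v = ∅ := by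
      rw [Finset.union_inter_distrib_right, Finset.disjoint_iff_inter_eq_empty.1 hJN]
      simp [Finset.singleton_inter_of_notMem hvN]
    rw [if_pos hvmem, hint, hcardv]
    simp
  have hg2 : ∑ s ∈ indepIn G U,
      (α * (if v ∈ J ∪ s then lam ^ (J ∪ s).card else 0) +
        β * (lam ^ (J ∪ s).card * (((J ∪ s) ∩ G.neighborFinset v).card : ℝ)))
      = β * (lam ^ J.card * WT G lam U) := by
    rw [WT, Finset.mul_sum, Finset.mul_sum]
    apply Finset.sum_congr rfl
    intro s hs
    have hsU : s ⊆ U := ((mem_indepIn G).1 hs).1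
    have hsK : s ⊆ K := (hsU.trans hUN).trans (Finset.subset_insert _ _)
    have hvs : v ∉ J ∪ s := by
      rw [Finset.mem_union]
      rintro (h | h)
      · exact hvJ h
      · exact hvU (hsU h)
    have hint : (J ∪ s) ∩ G.neighborFinset v = s := by
      rw [Finset.union_inter_distrib_right, Finset.disjoint_iff_inter_eq_empty.1 hJN,
        Finset.inter_eq_left.2 (hsU.trans hUN), Finset.empty_union]
    rw [if_neg hvs, hint, Finset.card_union_of_disjoint (hdisj s hsK), pow_add]
    ring
  rw [hZeq, hg1, hg2]
  -- apply the key local inequality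
  have hkey := key G hlam hα hβ hf (hnbhd v) hUN (lam := lam) (Δ := Δ)
  rw [← hcdef] at hkey
  have hpow : (0:ℝ) ≤ lam ^ J.card := le_of_lt (pow_pos hlam _)
  calc lam / (1 + lam) * c * (lam ^ (J ∪ {v}).card + lam ^ J.card * ZT G lam U)
      = lam ^ J.card * (lam / (1 + lam) * c * (lam + ZT G lam U)) := by
        rw [hcardv, pow_succ]; ring
    _ ≤ lam ^ J.card * (α * lam + β * WT G lam U) :=
        mul_le_mul_of_nonneg_left hkey hpow
    _ = α * lam ^ (J.card + 1) + β * (lam ^ J.card * WT G lam U) := by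
        rw [pow_succ]; ring
end
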